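/- arXiv:2404.11923 — 3 statements merged into one kernel-verified Lean document; each statement's English description precedes it below -/
import Mathlib

section
/- Covering Lemma: Let (X,S) and (Y,T) be transformation semigroups with S acting faithfully on X, and let (θ,φ) : (X,S) → (Y,T) be a surjective relational morphism. Then there exist a finite set Z with |Z| = max_{y∈Y} |θ⁻¹(y)|, a transformation semigroup (Z,U), and an injective relational morphism (ψ,μ) from (X,S) into the wreath product (Y,T) ≀ (Z,U); that is, a cascade product over (Y,T) and (Z,U) emulates (X,S). -/
/-!
Number the points of each fibre `θ⁻¹(y)` injectively by `Z = Fin m`, `m` the largest fibre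
size, take `U` to be all of `Z → Z`, and send `x` to the pairs `(y, code_y x)` with `y ∈ θ x`.
A transformation `s` lifts to every cascade transformation `(t, d)` with `t ∈ φ s` whose fibre
maps `d y` carry the code of `x` in the fibre over `y` to the code of `s x` in the fibre over
`t y`; such `d` exist because the codes are injective and `θ(x)·φ(s) ⊆ θ(x·s)`. Injectivity of
the codes makes the lift injective on states, and then on transformations since every `θ x` is
nonempty.
-/

section Covering

variable {X Y Z : Type*}

def wreathAct (p : (Y → Y) × (Y → Z → Z)) (q : Y × Z) : Y × Z :=
  (p.1 q.1, p.2 q.1 q.2)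

variable [Fintype Y] (θ : X → Set Y) (φ : (X → X) → Set (Y → Y))

noncomputable def maxFibreCard : ℕ :=
  Finset.univ.sup fun y : Y => Nat.card {x : X // y ∈ θ x}

lemma card_fibre_le_maxFibreCard (y : Y) : Nat.card {x : X // y ∈ θ x} ≤ maxFibreCard θ :=
  Finset.le_sup (f := fun y : Y => Nat.card {x : X // y ∈ θ x}) (Finset.mem_univ y)

variable [Finite X]

noncomputable def fibreCode (y : Y) : {x : X // y ∈ θ x} ↪ Fin (maxFibreCard θ) :=
  (Finite.equivFin _).toEmbedding.trans (Fin.castLEEmb (card_fibre_le_maxFibreCard θ y))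

def coverState (x : X) : Set (Y × Fin (maxFibreCard θ)) :=
  {q | ∃ h : q.1 ∈ θ x, q.2 = fibreCode θ q.1 ⟨x, h⟩}

def coverLift (s : X → X) : Set ((Y → Y) × (Y → Fin (maxFibreCard θ) → Fin (maxFibreCard θ))) :=
  {p | p.1 ∈ φ s ∧ ∀ x, ∀ q ∈ coverState θ x, wreathAct p q ∈ coverState θ (s x)}

variable {θ φ}

lemma coverState_nonempty {x : X} (hx : (θ x).Nonempty) : (coverState θ x).Nonempty :=
  let ⟨y, hy⟩ := hx
  ⟨(y, fibreCode θ y ⟨x, hy⟩), hy, rfl⟩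

lemma eq_of_coverState_inter_nonempty {x₁ x₂ : X}
    (h : (coverState θ x₁ ∩ coverState θ x₂).Nonempty) : x₁ = x₂ := by
  obtain ⟨q, ⟨h₁, e₁⟩, ⟨h₂, e₂⟩⟩ := h
  exact congrArg Subtype.val ((fibreCode θ q.1).injective (e₁.symm.trans e₂))

lemma coverLift_nonempty {s : X → X} (hs : (φ s).Nonempty)
    (hcompat : ∀ x, ∀ y ∈ θ x, ∀ t ∈ φ s, t y ∈ θ (s x)) : (coverLift θ φ s).Nonempty := by
  obtain ⟨t, ht⟩ := hs
  let d y := Function.extend (fibreCode θ y)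
    (fun x => fibreCode θ (t y) ⟨s x, hcompat x y x.2 t ht⟩) id
  refine ⟨(t, d), ht, ?_⟩
  rintro x q ⟨hy, hq⟩
  refine ⟨hcompat x q.1 hy t ht, ?_⟩
  change d q.1 q.2 = _
  rw [hq]
  exact (fibreCode θ q.1).injective.extend_apply _ _ _

lemma comp_mem_coverLift {s s' : X → X}
    (hmul : ∀ t ∈ φ s, ∀ t' ∈ φ s', (fun y => t' (t y)) ∈ φ (fun x => s' (s x)))
    {p p'} (hp : p ∈ coverLift θ φ s) (hp' : p' ∈ coverLift θ φ s') :
    ((fun y => p'.1 (p.1 y)), (fun y z => p'.2 (p.1 y) (p.2 y z))) ∈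
      coverLift θ φ (fun x => s' (s x)) :=
  ⟨hmul _ hp.1 _ hp'.1, fun x q hq => hp'.2 (s x) _ (hp.2 x q hq)⟩

lemma eq_of_coverLift_inter_nonempty (hθ : ∀ x, (θ x).Nonempty) {s₁ s₂ : X → X}
    (h : (coverLift θ φ s₁ ∩ coverLift θ φ s₂).Nonempty) : s₁ = s₂ := by
  obtain ⟨p, hp₁, hp₂⟩ := h
  funext x
  obtain ⟨q, hq⟩ := coverState_nonempty (hθ x)
  exact eq_of_coverState_inter_nonempty ⟨wreathAct p q, hp₁.2 x q hq, hp₂.2 x q hq⟩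

end Covering

theorem covering_lemma_general
    {X Y : Type} [Fintype X] [Fintype Y]
    (S : Set (X → X)) (T : Set (Y → Y))
    (θ : X → Set Y) (φ : (X → X) → Set (Y → Y))
    -- fully defined
    (hθne : ∀ x, (θ x).Nonempty)
    (hφne : ∀ s ∈ S, (φ s).Nonempty)
    (hφT : ∀ s ∈ S, φ s ⊆ T)
    -- compatibility of actions: θ(x)·φ(s) ⊆ θ(x·s)
    (hcompat : ∀ x, ∀ s ∈ S, ∀ y ∈ θ x, ∀ t ∈ φ s, t y ∈ θ (s x))
    -- relational morphism of semigroups: φ(s)·φ(s') ⊆ φ(s·s')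
    (hφmul : ∀ s ∈ S, ∀ s' ∈ S, ∀ t ∈ φ s, ∀ t' ∈ φ s',
      (fun y => t' (t y)) ∈ φ (fun x => s' (s x))) :
    ∃ m : ℕ,
      -- |Z| = max_{y ∈ Y} |θ⁻¹(y)|, where Z = Fin m
      m = Finset.univ.sup (fun y : Y => Nat.card {x : X // y ∈ θ x}) ∧
      ∃ U : Set (Fin m → Fin m),
        -- (Z,U) is a transformation semigroup
        (∀ u ∈ U, ∀ u' ∈ U, (fun z => u' (u z)) ∈ U) ∧
        ∃ (ψ : X → Set (Y × Fin m))
          (μ : (X → X) → Set ((Y → Y) × (Y → Fin m → Fin m))),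
          -- (ψ,μ) is fully defined
          (∀ x, (ψ x).Nonempty) ∧
          (∀ s ∈ S, (μ s).Nonempty) ∧
          -- the lifted transformations are cascade transformations of (Y,T) ≀ (Z,U)
          (∀ s ∈ S, ∀ p ∈ μ s, p.1 ∈ T ∧ ∀ y, p.2 y ∈ U) ∧
          -- compatibility of actions with the cascade action (y,z)·(t,d) = (y·t, z·d(y))
          (∀ x, ∀ s ∈ S, ∀ q ∈ ψ x, ∀ p ∈ μ s,
            (p.1 q.1, p.2 q.1 q.2) ∈ ψ (s x)) ∧
          -- μ is a relational morphism of semigroups w.r.t. the wreath product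
          -- multiplication (t,d)·(t',d') = (t·t', y ↦ d(y)·d'(y·t))
          (∀ s ∈ S, ∀ s' ∈ S, ∀ p ∈ μ s, ∀ p' ∈ μ s',
            ((fun y => p'.1 (p.1 y)), (fun y z => p'.2 (p.1 y) (p.2 y z))) ∈
              μ (fun x => s' (s x))) ∧
          -- injectivity on states
          (∀ x₁ x₂ : X, (ψ x₁ ∩ ψ x₂).Nonempty → x₁ = x₂) ∧
          -- injectivity on transformations
          (∀ s₁ ∈ S, ∀ s₂ ∈ S, (μ s₁ ∩ μ s₂).Nonempty → s₁ = s₂) :=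
  ⟨maxFibreCard θ, rfl, Set.univ, fun _ _ _ _ => Set.mem_univ _,
    coverState θ, coverLift θ φ,
    fun x => coverState_nonempty (hθne x),
    fun s hs => coverLift_nonempty (hφne s hs) fun x => hcompat x s hs,
    fun s hs _ hp => ⟨hφT s hs hp.1, fun _ => Set.mem_univ _⟩,
    fun x _ _ q hq _ hp => hp.2 x q hq,
    fun s hs s' hs' _ hp _ hp' => comp_mem_coverLift (hφmul s hs s' hs') hp hp',
    fun _ _ h => eq_of_coverState_inter_nonempty h,
    fun _ _ _ _ h => eq_of_coverLift_inter_nonempty hθne h⟩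

/-- **Covering Lemma.**  Let `(X,S)` and `(Y,T)` be transformation semigroups
(with `S` a set of total transformations of the finite nonempty set `X` closed
under composition, acting faithfully — here transformations are genuine
functions, so faithfulness is automatic), and let `(θ,φ)` be a surjective
relational morphism `(X,S) ↠ (Y,T)`.  Then there is a finite set
`Z = Fin m` with `m = max_{y ∈ Y} |θ⁻¹(y)|`, a transformation semigroup
`(Z,U)`, and an injective relational morphism `(ψ,μ)` from `(X,S)` into the
wreath product `(Y,T) ≀ (Z,U)`; i.e. a cascade product over `(Y,T)` and
`(Z,U)` emulates `(X,S)`. -/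
theorem covering_lemma
    {X Y : Type} [Fintype X] [Fintype Y] [Nonempty X] [Nonempty Y]
    (S : Set (X → X)) (T : Set (Y → Y))
    (hSclosed : ∀ s ∈ S, ∀ s' ∈ S, (fun x => s' (s x)) ∈ S)
    (hTclosed : ∀ t ∈ T, ∀ t' ∈ T, (fun y => t' (t y)) ∈ T)
    (θ : X → Set Y) (φ : (X → X) → Set (Y → Y))
    -- fully defined
    (hθne : ∀ x, (θ x).Nonempty)
    (hφne : ∀ s ∈ S, (φ s).Nonempty)
    (hφT : ∀ s ∈ S, φ s ⊆ T)
    -- compatibility of actions: θ(x)·φ(s) ⊆ θ(x·s)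
    (hcompat : ∀ x, ∀ s ∈ S, ∀ y ∈ θ x, ∀ t ∈ φ s, t y ∈ θ (s x))
    -- relational morphism of semigroups: φ(s)·φ(s') ⊆ φ(s·s')
    (hφmul : ∀ s ∈ S, ∀ s' ∈ S, ∀ t ∈ φ s, ∀ t' ∈ φ s',
      (fun y => t' (t y)) ∈ φ (fun x => s' (s x)))
    -- surjectivity
    (hθsurj : ∀ y : Y, ∃ x : X, y ∈ θ x)
    (hφsurj : ∀ t ∈ T, ∃ s ∈ S, t ∈ φ s) :
    ∃ m : ℕ,
      -- |Z| = max_{y ∈ Y} |θ⁻¹(y)|, where Z = Fin m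
      m = Finset.univ.sup (fun y : Y => Nat.card {x : X // y ∈ θ x}) ∧
      ∃ U : Set (Fin m → Fin m),
        -- (Z,U) is a transformation semigroup
        (∀ u ∈ U, ∀ u' ∈ U, (fun z => u' (u z)) ∈ U) ∧
        ∃ (ψ : X → Set (Y × Fin m))
          (μ : (X → X) → Set ((Y → Y) × (Y → Fin m → Fin m))),
          -- (ψ,μ) is fully defined
          (∀ x, (ψ x).Nonempty) ∧
          (∀ s ∈ S, (μ s).Nonempty) ∧
          -- the lifted transformations are cascade transformations of (Y,T) ≀ (Z,U)
          (∀ s ∈ S, ∀ p ∈ μ s, p.1 ∈ T ∧ ∀ y, p.2 y ∈ U) ∧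
          -- compatibility of actions with the cascade action (y,z)·(t,d) = (y·t, z·d(y))
          (∀ x, ∀ s ∈ S, ∀ q ∈ ψ x, ∀ p ∈ μ s,
            (p.1 q.1, p.2 q.1 q.2) ∈ ψ (s x)) ∧
          -- μ is a relational morphism of semigroups w.r.t. the wreath product
          -- multiplication (t,d)·(t',d') = (t·t', y ↦ d(y)·d'(y·t))
          (∀ s ∈ S, ∀ s' ∈ S, ∀ p ∈ μ s, ∀ p' ∈ μ s',
            ((fun y => p'.1 (p.1 y)), (fun y z => p'.2 (p.1 y) (p.2 y z))) ∈
              μ (fun x => s' (s x))) ∧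
          -- injectivity on states
          (∀ x₁ x₂ : X, (ψ x₁ ∩ ψ x₂).Nonempty → x₁ = x₂) ∧
          -- injectivity on transformations
          (∀ s₁ ∈ S, ∀ s₂ ∈ S, (μ s₁ ∩ μ s₂).Nonempty → s₁ = s₂) :=
  covering_lemma_general S T θ φ hθne hφne hφT hcompat hφmul
end

section
/- The lifts multiply compatibly (the labelling functions cancel out in the middle): for s, s' ∈ S, t ∈ φ(s), t' ∈ φ(s'), and any y ∈ Y, applying d_{s,t}(y) and then d_{s',t'}(y·t) agrees with d_{s·s', t·t'}(y) on the set w_y(θ⁻¹(y)); consequently μ(s)·μ(s') ⊆ μ(s·s') under the wreath product multiplication (t,d)·(t',d') = (t·t', y ↦ d(y)·d'(y·t)). -/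
/-!
The labels cancel in the middle: `d_{s,t}(y)` sends `w_y(x)` to `w_{y·t}(x·s)`, and since
`y·t ∈ θ(x·s)`, `d_{s',t'}(y·t)` sends that label to `w_{y·t·t'}(x·s·s')`, which is exactly the
value of `d_{s·s',t·t'}(y)` at `w_y(x)`.
-/

variable {X Y Z : Type*}

def IsDependencyFun (θ : X → Set Y) (w : Y → X → Z) (s : X → X) (t : Y → Y)
    (f : Y → Z → Z) : Prop :=
  ∀ y x, y ∈ θ x → f y (w y x) = w (t y) (s x)

theorem IsDependencyFun.comp {θ : X → Set Y} {w : Y → X → Z} {s s' : X → X} {t t' : Y → Y}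
    {f g : Y → Z → Z} (hmaps : ∀ x, ∀ y ∈ θ x, t y ∈ θ (s x))
    (hf : IsDependencyFun θ w s t f) (hg : IsDependencyFun θ w s' t' g) :
    IsDependencyFun θ w (fun x => s' (s x)) (fun y => t' (t y)) (fun y z => g (t y) (f y z)) :=
  fun y x hx => (congrArg (g (t y)) (hf y x hx)).trans (hg (t y) (s x) (hmaps x y hx))

theorem lifts_multiply_compatibly_general
    {X Y Z : Type}
    (S : Set (X → X))
    (hSclosed : ∀ s ∈ S, ∀ s' ∈ S, (fun x => s' (s x)) ∈ S)
    (θ : X → Set Y) (φ : (X → X) → Set (Y → Y))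
    (hcompat : ∀ x, ∀ s ∈ S, ∀ y ∈ θ x, ∀ t ∈ φ s, t y ∈ θ (s x))
    (hφmul : ∀ s ∈ S, ∀ s' ∈ S, ∀ t ∈ φ s, ∀ t' ∈ φ s',
      (fun y => t' (t y)) ∈ φ (fun x => s' (s x)))
    (w : Y → X → Z)
    -- the dependency function d_{s,t}(y) agrees with z ↦ w_{y·t}((w_y⁻¹(z))·s)
    -- on w_y(θ⁻¹(y))
    (d : (X → X) → (Y → Y) → Y → Z → Z)
    (hd : ∀ s ∈ S, ∀ t ∈ φ s, ∀ y, ∀ x, y ∈ θ x →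
      d s t y (w y x) = w (t y) (s x))
    -- μ(s) = {(t, d) : t ∈ φ(s), d agrees with the dependency functions of s}
    (μ : (X → X) → Set ((Y → Y) × (Y → Z → Z)))
    (hμ : ∀ s, μ s = {p : (Y → Y) × (Y → Z → Z) | p.1 ∈ φ s ∧
      ∀ y, ∀ x, y ∈ θ x → p.2 y (w y x) = w (p.1 y) (s x)}) :
    -- applying d_{s,t}(y) then d_{s',t'}(y·t) agrees with d_{s·s',t·t'}(y)
    -- on w_y(θ⁻¹(y))
    (∀ s ∈ S, ∀ s' ∈ S, ∀ t ∈ φ s, ∀ t' ∈ φ s', ∀ y, ∀ x, y ∈ θ x →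
      d s' t' (t y) (d s t y (w y x)) =
        d (fun x => s' (s x)) (fun y => t' (t y)) y (w y x)) ∧
    -- consequently μ(s)·μ(s') ⊆ μ(s·s')
    (∀ s ∈ S, ∀ s' ∈ S, ∀ p ∈ μ s, ∀ p' ∈ μ s',
      ((fun y => p'.1 (p.1 y)), (fun y z => p'.2 (p.1 y) (p.2 y z))) ∈
        μ (fun x => s' (s x))) := by
  have hmaps : ∀ s ∈ S, ∀ t ∈ φ s, ∀ x, ∀ y ∈ θ x, t y ∈ θ (s x) :=
    fun s hs t ht x y hy => hcompat x s hs y hy t ht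
  refine ⟨fun s hs s' hs' t ht t' ht' y x hx => ?_, fun s hs s' hs' p hp p' hp' => ?_⟩
  · have hcomp := IsDependencyFun.comp (hmaps s hs t ht) (hd s hs t ht) (hd s' hs' t' ht')
    exact (hcomp y x hx).trans
      (hd _ (hSclosed s hs s' hs') _ (hφmul s hs s' hs' t ht t' ht') y x hx).symm
  · rw [hμ] at hp hp' ⊢
    obtain ⟨ht, hp⟩ := hp
    obtain ⟨ht', hp'⟩ := hp'
    exact ⟨hφmul s hs s' hs' _ ht _ ht', IsDependencyFun.comp (hmaps s hs _ ht) hp hp'⟩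

/-- The lifts multiply compatibly (the labelling functions cancel out in the
middle): for `s, s' ∈ S`, `t ∈ φ(s)`, `t' ∈ φ(s')` and any `y ∈ Y`, applying
`d_{s,t}(y)` and then `d_{s',t'}(y·t)` agrees with `d_{s·s', t·t'}(y)` on the
set `w_y(θ⁻¹(y))`; consequently `μ(s)·μ(s') ⊆ μ(s·s')` under the wreath
product multiplication `(t,d)·(t',d') = (t·t', y ↦ d(y)·d'(y·t))`. -/
theorem lifts_multiply_compatibly
    {X Y Z : Type}
    (S : Set (X → X)) (T : Set (Y → Y))
    (hSclosed : ∀ s ∈ S, ∀ s' ∈ S, (fun x => s' (s x)) ∈ S)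
    (θ : X → Set Y) (φ : (X → X) → Set (Y → Y))
    (hθne : ∀ x, (θ x).Nonempty)
    (hφne : ∀ s ∈ S, (φ s).Nonempty)
    (hφT : ∀ s ∈ S, φ s ⊆ T)
    (hcompat : ∀ x, ∀ s ∈ S, ∀ y ∈ θ x, ∀ t ∈ φ s, t y ∈ θ (s x))
    (hφmul : ∀ s ∈ S, ∀ s' ∈ S, ∀ t ∈ φ s, ∀ t' ∈ φ s',
      (fun y => t' (t y)) ∈ φ (fun x => s' (s x)))
    -- labelling: w_y injective on θ⁻¹(y)
    (w : Y → X → Z)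
    (hwinj : ∀ y, ∀ x₁, y ∈ θ x₁ → ∀ x₂, y ∈ θ x₂ → w y x₁ = w y x₂ → x₁ = x₂)
    -- the dependency function d_{s,t}(y) agrees with z ↦ w_{y·t}((w_y⁻¹(z))·s)
    -- on w_y(θ⁻¹(y))
    (d : (X → X) → (Y → Y) → Y → Z → Z)
    (hd : ∀ s ∈ S, ∀ t ∈ φ s, ∀ y, ∀ x, y ∈ θ x →
      d s t y (w y x) = w (t y) (s x))
    -- μ(s) = {(t, d) : t ∈ φ(s), d agrees with the dependency functions of s}
    (μ : (X → X) → Set ((Y → Y) × (Y → Z → Z)))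
    (hμ : ∀ s, μ s = {p : (Y → Y) × (Y → Z → Z) | p.1 ∈ φ s ∧
      ∀ y, ∀ x, y ∈ θ x → p.2 y (w y x) = w (p.1 y) (s x)}) :
    -- applying d_{s,t}(y) then d_{s',t'}(y·t) agrees with d_{s·s',t·t'}(y)
    -- on w_y(θ⁻¹(y))
    (∀ s ∈ S, ∀ s' ∈ S, ∀ t ∈ φ s, ∀ t' ∈ φ s', ∀ y, ∀ x, y ∈ θ x →
      d s' t' (t y) (d s t y (w y x)) =
        d (fun x => s' (s x)) (fun y => t' (t y)) y (w y x)) ∧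
    -- consequently μ(s)·μ(s') ⊆ μ(s·s')
    (∀ s ∈ S, ∀ s' ∈ S, ∀ p ∈ μ s, ∀ p' ∈ μ s',
      ((fun y => p'.1 (p.1 y)), (fun y z => p'.2 (p.1 y) (p.2 y z))) ∈
        μ (fun x => s' (s x))) :=
  lifts_multiply_compatibly_general S hSclosed θ φ hcompat hφmul w d hd μ hμ
end

section
/- The n(n−1) method yields compatible state and transformation relations: let X = {1,…,n} with n ≥ 2, let S be a semigroup of total functions X → X, let θ(x) = X \ {x}, and let φ(s) = {s} if s is a permutation of X and φ(s) = {c_j : j ∉ image(s)} if s is not a permutation, where c_j denotes the constant map with image {j}. Then θ(x) ≠ ∅ and φ(s) ≠ ∅ for all x ∈ X, s ∈ S, and θ(x)·φ(s) ⊆ θ(x·s) for all x ∈ X, s ∈ S; that is, if y ≠ x and t ∈ φ(s), then y·t ≠ x·s. -/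
/-!
A permutation `s` is injective, so it keeps distinct states distinct: `y ≠ x` gives `s y ≠ s x`.
A non-permutation of a finite set is not surjective, so some `j` lies outside its image, and the
constant map `c_j` sends every state to `j ≠ s x`. Nonemptiness of `θ x` is `n ≥ 2`.
-/

open Function

variable {α : Type*}

/-- The transformation relation `φ(s)` of the `n(n−1)` method. -/
def permOrMissedConstants (s : α → α) : Set (α → α) :=
  {t : α → α |
    (Bijective s ∧ t = s) ∨ (¬ Bijective s ∧ ∃ j : α, j ∉ Set.range s ∧ t = fun _ => j)}

theorem exists_notMem_range_of_not_bijective [Finite α] {s : α → α} (hs : ¬ Bijective s) :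
    ∃ j, j ∉ Set.range s := by
  simpa only [Surjective, Set.mem_range, not_forall] using
    mt Finite.surjective_iff_bijective.mp hs

theorem permOrMissedConstants_nonempty [Finite α] (s : α → α) :
    (permOrMissedConstants s).Nonempty := by
  by_cases hs : Bijective s
  · exact ⟨s, Or.inl ⟨hs, rfl⟩⟩
  · obtain ⟨j, hj⟩ := exists_notMem_range_of_not_bijective hs
    exact ⟨fun _ => j, Or.inr ⟨hs, j, hj, rfl⟩⟩

theorem apply_ne_of_mem_permOrMissedConstants {s t : α → α} (ht : t ∈ permOrMissedConstants s)
    {x y : α} (hxy : y ≠ x) : t y ≠ s x := by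
  rcases ht with ⟨hs, rfl⟩ | ⟨-, j, hj, rfl⟩
  · exact hs.injective.ne hxy
  · exact fun hjx => hj ⟨x, hjx.symm⟩

theorem n_times_n_minus_one_method_general
    (n : ℕ) (hn : 2 ≤ n)
    (S : Set (Fin n → Fin n))
    (θ : Fin n → Set (Fin n))
    (hθ : ∀ x, θ x = {y : Fin n | y ≠ x})
    (φ : (Fin n → Fin n) → Set (Fin n → Fin n))
    (hφ : ∀ s, φ s =
      {t : Fin n → Fin n |
        (Function.Bijective s ∧ t = s) ∨
        (¬ Function.Bijective s ∧ ∃ j : Fin n, j ∉ Set.range s ∧ t = fun _ => j)}) :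
    (∀ x, (θ x).Nonempty) ∧
    (∀ s ∈ S, (φ s).Nonempty) ∧
    (∀ x, ∀ s ∈ S, ∀ y ∈ θ x, ∀ t ∈ φ s, t y ∈ θ (s x)) := by
  obtain rfl : θ = fun x => {y | y ≠ x} := funext hθ
  obtain rfl : φ = permOrMissedConstants := funext hφ
  have : Nontrivial (Fin n) := Fin.nontrivial_iff_two_le.mpr hn
  exact ⟨exists_ne, fun s _ => permOrMissedConstants_nonempty s,
    fun _ _ _ _ hy _ ht => apply_ne_of_mem_permOrMissedConstants ht hy⟩

/-- The `n(n−1)` method yields compatible state and transformation relations: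
let `X = Fin n` with `n ≥ 2`, let `S` be a semigroup of total functions
`X → X`, let `θ(x) = X \ {x}`, and let `φ(s) = {s}` if `s` is a permutation
of `X` and `φ(s) = {c_j : j ∉ image(s)}` if `s` is not a permutation, where
`c_j` denotes the constant map with image `{j}`.  Then `θ(x) ≠ ∅` and
`φ(s) ≠ ∅` for all `x ∈ X, s ∈ S`, and `θ(x)·φ(s) ⊆ θ(x·s)` for all
`x ∈ X, s ∈ S`; that is, if `y ≠ x` and `t ∈ φ(s)`, then `y·t ≠ x·s`. -/
theorem n_times_n_minus_one_method
    (n : ℕ) (hn : 2 ≤ n)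
    (S : Set (Fin n → Fin n))
    (hSclosed : ∀ s ∈ S, ∀ s' ∈ S, (fun x => s' (s x)) ∈ S)
    (θ : Fin n → Set (Fin n))
    (hθ : ∀ x, θ x = {y : Fin n | y ≠ x})
    (φ : (Fin n → Fin n) → Set (Fin n → Fin n))
    (hφ : ∀ s, φ s =
      {t : Fin n → Fin n |
        (Function.Bijective s ∧ t = s) ∨
        (¬ Function.Bijective s ∧ ∃ j : Fin n, j ∉ Set.range s ∧ t = fun _ => j)}) :
    (∀ x, (θ x).Nonempty) ∧
    (∀ s ∈ S, (φ s).Nonempty) ∧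
    (∀ x, ∀ s ∈ S, ∀ y ∈ θ x, ∀ t ∈ φ s, t y ∈ θ (s x)) :=
  n_times_n_minus_one_method_general n hn S θ hθ φ hφ
end
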